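/- arXiv:1907.01940 — 7 statements merged into one kernel-verified Lean document; each statement's English description precedes it below -/
import Mathlib

section
/- For all n ≥ 1 and d ≥ 1, every set A ⊆ [n]^d that percolates in d-neighbour bootstrap percolation on [n]^d satisfies |A| ≥ n^{d-1}. -/
/-- The grid `[n]^d = {1,...,n}^d`, embedded in `ℕ^d`. -/
def gridSet (n d : ℕ) : Set (Fin d → ℕ) := {v | ∀ i, 1 ≤ v i ∧ v i ≤ n}

/-- Adjacency: differ by 1 in exactly one coordinate. -/
def gridAdj {d : ℕ} (u v : Fin d → ℕ) : Prop :=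
  ∃ j, (u j = v j + 1 ∨ v j = u j + 1) ∧ ∀ i, i ≠ j → u i = v i

/-- One round of `r`-neighbour bootstrap percolation on `[n]^d`. -/
def bpStep (n d r : ℕ) (S : Set (Fin d → ℕ)) : Set (Fin d → ℕ) :=
  S ∪ {v ∈ gridSet n d | r ≤ {u ∈ S | gridAdj u v}.ncard}

/-- Infected set after `t` rounds, starting from `A`. -/
def infected (n d r : ℕ) (A : Set (Fin d → ℕ)) (t : ℕ) : Set (Fin d → ℕ) :=
  (bpStep n d r)^[t] A

/-- The closure of `A`: all eventually infected vertices. -/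
def bpClosure (n d r : ℕ) (A : Set (Fin d → ℕ)) : Set (Fin d → ℕ) :=
  ⋃ t, infected n d r A t

/-- `A` percolates if every grid vertex is eventually infected. -/
def percolates (n d r : ℕ) (A : Set (Fin d → ℕ)) : Prop :=
  gridSet n d ⊆ bpClosure n d r A

/-- Percolation time: least `t` with the whole grid infected. -/
noncomputable def percTime (n d r : ℕ) (A : Set (Fin d → ℕ)) : ℕ :=
  sInf {t | gridSet n d ⊆ infected n d r A t}

/-- `V_k`: grid vertices of coordinate sum `k`. -/
def hyperplane (n d k : ℕ) : Set (Fin d → ℕ) := {v ∈ gridSet n d | ∑ i, v i = k}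

/-- The "cyclic combination" set `A = ⋃_{i=1}^d V_{in}`. -/
def diagUnion (n d : ℕ) : Set (Fin d → ℕ) :=
  ⋃ i ∈ Finset.Icc 1 d, hyperplane n d (i * n)

/-!
The perimeter of a finite set `S` of vertices (the number of pairs `(u, w)` of neighbours
with `u ∈ S`, `w ∉ S`) cannot increase in `d`-neighbour bootstrap percolation on `ℕ^d`: every
vertex has at most `2d` neighbours, so a newly infected vertex removes at least `d` boundary
pairs and adds at most `d`. If `A` percolates in `[n]^d`, the perimeter of the whole grid,
which is `2d n^(d-1)`, is therefore at most that of `A`, which is at most `2d |A|`.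
-/

open Finset Function

namespace SimpleGraph

variable {V : Type*} (G : SimpleGraph V) [G.LocallyFinite] [DecidableEq V]

def perimeter (S : Finset V) : ℕ := ∑ u ∈ S, #(G.neighborFinset u \ S)

variable {G}

lemma card_neighborFinset_sdiff_insert (u : V) {v : V} {S : Finset V} (hv : v ∉ S) :
    #(G.neighborFinset u \ insert v S) + (if v ∈ G.neighborFinset u then 1 else 0) =
      #(G.neighborFinset u \ S) := by
  rw [sdiff_insert]
  split_ifs with huv
  · exact card_erase_add_one (mem_sdiff.2 ⟨huv, hv⟩)
  · rw [erase_eq_of_notMem fun h => huv (mem_sdiff.1 h).1, add_zero]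

lemma perimeter_insert_add {S : Finset V} {v : V} (hv : v ∉ S) :
    G.perimeter (insert v S) + 2 * #(G.neighborFinset v ∩ S) = G.perimeter S + G.degree v := by
  have hout : #(G.neighborFinset v \ insert v S) + #(G.neighborFinset v ∩ S) = G.degree v := by
    rw [sdiff_insert,
      erase_eq_of_notMem fun h => G.notMem_neighborFinset_self v (mem_sdiff.1 h).1,
      card_sdiff_add_card_inter, card_neighborFinset_eq_degree]
  have hin :
      #(G.neighborFinset v ∩ S) = ∑ u ∈ S, if v ∈ G.neighborFinset u then 1 else 0 := by
    rw [← card_filter, inter_comm, ← filter_mem_eq_inter]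
    exact congrArg card <| filter_congr fun u _ => by
      rw [mem_neighborFinset, mem_neighborFinset, G.adj_comm]
  have hS : G.perimeter S = ∑ u ∈ S, #(G.neighborFinset u \ insert v S) +
      #(G.neighborFinset v ∩ S) := by
    rw [perimeter, hin, ← sum_add_distrib]
    exact sum_congr rfl fun u _ => (card_neighborFinset_sdiff_insert u hv).symm
  rw [perimeter, sum_insert hv, hS, ← hout]
  ring

variable {r : ℕ}

lemma perimeter_insert_le (hdeg : ∀ v, G.degree v ≤ 2 * r) {S : Finset V} {v : V}
    (hr : r ≤ #(G.neighborFinset v ∩ S)) : G.perimeter (insert v S) ≤ G.perimeter S := by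
  by_cases hv : v ∈ S
  · rw [insert_eq_of_mem hv]
  · have := perimeter_insert_add (G := G) hv
    have := hdeg v
    omega

lemma perimeter_union_le (hdeg : ∀ v, G.degree v ≤ 2 * r) {S : Finset V} (U : Finset V)
    (hU : ∀ v ∈ U, r ≤ #(G.neighborFinset v ∩ S)) :
    G.perimeter (S ∪ U) ≤ G.perimeter S := by
  induction U using Finset.induction_on with
  | empty => rw [union_empty]
  | insert v U _ ih =>
    rw [union_insert]
    refine (perimeter_insert_le hdeg ?_).trans (ih fun w hw => hU w (mem_insert_of_mem hw))
    exact (hU v (mem_insert_self v U)).trans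
      (card_le_card (inter_subset_inter_left subset_union_left))

lemma perimeter_le_mul_card (hdeg : ∀ v, G.degree v ≤ 2 * r) (S : Finset V) :
    G.perimeter S ≤ 2 * r * #S := by
  rw [perimeter, mul_comm, ← smul_eq_mul, ← sum_const]
  exact sum_le_sum fun u _ => (card_le_card sdiff_subset).trans
    ((card_neighborFinset_eq_degree G u).trans_le (hdeg u))

end SimpleGraph

-- The graph lives on all of `ℕ^d`, so pairs leaving `[n]^d` count towards the perimeter.
def gridGraph (d : ℕ) : SimpleGraph (Fin d → ℕ) where
  Adj := gridAdj
  symm := ⟨fun _ _ ⟨j, hj, h⟩ => ⟨j, hj.symm, fun i hi => (h i hi).symm⟩⟩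
  loopless := ⟨fun _ ⟨_, hj, _⟩ => by omega⟩

lemma exists_update_eq_of_gridGraph_adj {d : ℕ} {u w : Fin d → ℕ}
    (h : (gridGraph d).Adj u w) :
    ∃ p : Fin d × Bool, update u p.1 (if p.2 then u p.1 + 1 else u p.1 - 1) = w := by
  obtain ⟨j, hj, hw⟩ := h
  refine ⟨(j, decide (w j = u j + 1)), funext fun i => ?_⟩
  rcases eq_or_ne i j with rfl | hij
  · by_cases h : w i = u i + 1
    · simp [h]
    · simp [h]; omega
  · rw [update_of_ne hij, hw i hij]

noncomputable instance (d : ℕ) : (gridGraph d).LocallyFinite := fun _ =>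
  ((Set.finite_range _).subset fun _ h => exists_update_eq_of_gridGraph_adj h).fintype

lemma gridGraph_degree_le {d : ℕ} (u : Fin d → ℕ) : (gridGraph d).degree u ≤ 2 * d := by
  have hsub : (gridGraph d).neighborFinset u ⊆
      univ.image fun p : Fin d × Bool => update u p.1 (if p.2 then u p.1 + 1 else u p.1 - 1) :=
    fun w hw => mem_image.2 <| by
      simpa using exists_update_eq_of_gridGraph_adj ((SimpleGraph.mem_neighborFinset _ _ _).1 hw)
  rw [← SimpleGraph.card_neighborFinset_eq_degree]
  refine (card_le_card hsub).trans (card_image_le.trans ?_)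
  simp [mul_comm]

def gridFinset (n d : ℕ) : Finset (Fin d → ℕ) := Fintype.piFinset fun _ => Icc 1 n

lemma coe_gridFinset (n d : ℕ) : (gridFinset n d : Set (Fin d → ℕ)) = gridSet n d := by
  ext u
  rw [mem_coe, gridFinset, Fintype.mem_piFinset]
  simp only [mem_Icc]
  rfl

lemma ncard_gridAdj_eq_card_neighborFinset_inter {d : ℕ} (S : Finset (Fin d → ℕ))
    (v : Fin d → ℕ) :
    {u | u ∈ S ∧ gridAdj u v}.ncard = #((gridGraph d).neighborFinset v ∩ S) := by
  rw [← Set.ncard_coe_finset]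
  congr 1
  ext u
  simp only [coe_inter, Set.mem_inter_iff, SimpleGraph.coe_neighborFinset,
    SimpleGraph.mem_neighborSet, (gridGraph d).adj_comm v, mem_coe]
  exact and_comm

lemma bpStep_coe {n d : ℕ} (S : Finset (Fin d → ℕ)) :
    bpStep n d d S =
      ↑(S ∪ {v ∈ gridFinset n d | d ≤ #((gridGraph d).neighborFinset v ∩ S)}) := by
  ext v
  simp only [bpStep, ncard_gridAdj_eq_card_neighborFinset_inter, coe_union, coe_filter,
    ← coe_gridFinset, Set.mem_union, mem_coe, Set.mem_ofPred_eq]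

lemma exists_infected_eq_coe_perimeter_le {n d : ℕ} (A : Finset (Fin d → ℕ)) (t : ℕ) :
    ∃ S : Finset (Fin d → ℕ), infected n d d A t = S ∧
      (gridGraph d).perimeter S ≤ (gridGraph d).perimeter A := by
  induction t with
  | zero => exact ⟨A, rfl, le_rfl⟩
  | succ t ih =>
    obtain ⟨S, hS, hper⟩ := ih
    refine ⟨_, by rw [infected, iterate_succ_apply', ← infected, hS, bpStep_coe], ?_⟩
    exact (SimpleGraph.perimeter_union_le gridGraph_degree_le _
      fun v hv => (mem_filter.1 hv).2).trans hper

lemma infected_mono (n d r : ℕ) (A : Set (Fin d → ℕ)) : Monotone (infected n d r A) :=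
  monotone_nat_of_le_succ fun t => by
    rw [infected, infected, iterate_succ_apply']
    exact Set.subset_union_left

lemma infected_subset_gridSet {n d r : ℕ} {A : Set (Fin d → ℕ)} (hA : A ⊆ gridSet n d)
    (t : ℕ) : infected n d r A t ⊆ gridSet n d := by
  induction t with
  | zero => exact hA
  | succ t ih =>
    rw [infected, iterate_succ_apply']
    exact Set.union_subset ih fun _ hv => hv.1

lemma exists_infected_eq_gridSet {n d r : ℕ} {A : Set (Fin d → ℕ)} (hA : A ⊆ gridSet n d)
    (hperc : percolates n d r A) : ∃ t, infected n d r A t = gridSet n d := by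
  rw [percolates, bpClosure, ← coe_gridFinset] at hperc
  obtain ⟨t, ht⟩ :=
    (infected_mono n d r A).directed_le.exists_mem_subset_of_finset_subset_biUnion hperc
  exact ⟨t, (infected_subset_gridSet hA t).antisymm (coe_gridFinset n d ▸ ht)⟩

lemma card_filter_gridFinset_apply_eq {n d c : ℕ} (j : Fin d) (hc : c ∈ Icc 1 n) :
    #{u ∈ gridFinset n d | u j = c} = n ^ (d - 1) := by
  rw [gridFinset, Fintype.card_filter_piFinset_const_eq_of_mem _ _ hc, Nat.card_Icc,
    Nat.add_sub_cancel, Fintype.card_fin]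

-- `(j, true)` and `(j, false)` are the unit steps up and down in coordinate `j`.
lemma card_exitDirections_le {n d : ℕ} {u : Fin d → ℕ} (hu : u ∈ gridFinset n d) :
    #{p : Fin d × Bool | u p.1 = if p.2 then n else 1} ≤
      #((gridGraph d).neighborFinset u \ gridFinset n d) := by
  have hu' : ∀ i, 1 ≤ u i ∧ u i ≤ n := by rwa [← mem_coe, coe_gridFinset] at hu
  refine card_le_card_of_injOn (fun p => update u p.1 (if p.2 then n + 1 else 0)) ?_ ?_
  · rintro ⟨j, b⟩ hp
    simp only [coe_filter, mem_univ, true_and, Set.mem_ofPred_eq] at hp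
    rw [mem_coe, mem_sdiff, SimpleGraph.mem_neighborFinset, ← mem_coe, coe_gridFinset]
    refine ⟨⟨j, ?_, fun i hi => (update_of_ne hi _ _).symm⟩, fun h => ?_⟩
    · cases b <;> simp_all
    · have := h j
      cases b <;> simp at this
  · rintro ⟨j, b⟩ - ⟨k, c⟩ - h
    have hj := congrFun h j
    dsimp only at hj
    rw [update_self] at hj
    by_cases hjk : j = k
    · subst hjk
      rw [update_self] at hj
      cases b <;> cases c <;> simp_all
    · rw [update_of_ne hjk] at hj
      have := hu' j
      cases b <;> simp at hj <;> omega

lemma two_mul_mul_pow_le_perimeter_gridFinset {n d : ℕ} (hn : 1 ≤ n) :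
    2 * d * n ^ (d - 1) ≤ (gridGraph d).perimeter (gridFinset n d) := by
  calc 2 * d * n ^ (d - 1) = ∑ _p : Fin d × Bool, n ^ (d - 1) := by simp [mul_comm]
    _ = ∑ p : Fin d × Bool, #{u ∈ gridFinset n d | u p.1 = if p.2 then n else 1} :=
        sum_congr rfl fun p _ => (card_filter_gridFinset_apply_eq p.1 <| by
          cases p.2 <;> simpa using hn).symm
    _ = ∑ u ∈ gridFinset n d, #{p : Fin d × Bool | u p.1 = if p.2 then n else 1} :=
        (sum_card_bipartiteAbove_eq_sum_card_bipartiteBelow _).symm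
    _ ≤ (gridGraph d).perimeter (gridFinset n d) :=
        sum_le_sum fun u hu => card_exitDirections_le hu

theorem smallest_percolating_lower_bound (n d : ℕ) (hn : 1 ≤ n) (hd : 1 ≤ d)
    (A : Set (Fin d → ℕ)) (hA : A ⊆ gridSet n d) (hperc : percolates n d d A) :
    n ^ (d - 1) ≤ A.ncard := by
  obtain ⟨t, ht⟩ := exists_infected_eq_gridSet hA hperc
  lift A to Finset (Fin d → ℕ) using
    (gridFinset n d).finite_toSet.subset (coe_gridFinset n d ▸ hA)
  obtain ⟨S, hS, hper⟩ := exists_infected_eq_coe_perimeter_le (n := n) A t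
  obtain rfl : S = gridFinset n d := by rw [← coe_inj, ← hS, ht, coe_gridFinset]
  rw [Set.ncard_coe_finset]
  refine Nat.le_of_mul_le_mul_left ?_ (by omega : 0 < 2 * d)
  calc 2 * d * n ^ (d - 1) ≤ (gridGraph d).perimeter (gridFinset n d) :=
        two_mul_mul_pow_le_perimeter_gridFinset hn
    _ ≤ (gridGraph d).perimeter A := hper
    _ ≤ 2 * d * #A := SimpleGraph.perimeter_le_mul_card gridGraph_degree_le A
end

section
/- For all n ≥ 1 and d ≥ 1, the set A = ⋃_{i=1}^{d} V_{in}, where V_k = {v ∈ [n]^d : v_1 + ... + v_d = k}, has exactly n^{d-1} elements. -/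
/-! The coordinate sum of a point of `[n]^d` lies in `[d, dn]`, whose multiples of `n` are exactly
`n, 2n, …, dn`; so `A` is the set of grid points with coordinate sum divisible by `n`. Such a point
is determined by its first `d - 1` coordinates, which are arbitrary: the last one is the unique
`t ∈ [1, n]` with `n ∣ s + t`, where `s` is the sum of the others. -/

theorem Nat.dvd_add_iff_eq_sub_mod {n s t : ℕ} (ht₁ : 1 ≤ t) (ht : t ≤ n) :
    n ∣ s + t ↔ t = n - s % n := by
  have hmod : s % n < n := Nat.mod_lt s (by omega)
  have hsplit : s + t = n * (s / n) + (s % n + t) := by have := Nat.div_add_mod s n; omega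
  rw [hsplit, Nat.dvd_add_right (dvd_mul_right n _)]
  constructor
  · intro h
    have := Nat.eq_of_dvd_of_lt_two_mul (by omega) h (by omega)
    omega
  · intro h
    rw [show s % n + t = n by omega]

theorem gridSet_eq_coe_piFinset (n d : ℕ) :
    gridSet n d = ↑(Fintype.piFinset fun _ : Fin d => Finset.Icc 1 n) := by
  ext v
  simp only [gridSet, Set.mem_ofPred_eq, Finset.mem_coe, Fintype.mem_piFinset, Finset.mem_Icc]

theorem ncard_gridSet (n d : ℕ) : (gridSet n d).ncard = n ^ d := by
  rw [gridSet_eq_coe_piFinset, Set.ncard_coe_finset, Fintype.card_piFinset]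
  simp

theorem sum_mem_Icc_of_mem_gridSet {n d : ℕ} {v : Fin d → ℕ} (hv : v ∈ gridSet n d) :
    d ≤ ∑ i, v i ∧ ∑ i, v i ≤ d * n := by
  constructor
  · simpa using Finset.card_nsmul_le_sum Finset.univ v 1 fun i _ => (hv i).1
  · simpa using Finset.sum_le_card_nsmul Finset.univ v n fun i _ => (hv i).2

theorem init_mem_gridSet {n m : ℕ} {v : Fin (m + 1) → ℕ} (hv : v ∈ gridSet n (m + 1)) :
    Fin.init v ∈ gridSet n m :=
  fun i => hv i.castSucc

theorem snoc_mem_gridSet {n m t : ℕ} {u : Fin m → ℕ} (hu : u ∈ gridSet n m) (ht₁ : 1 ≤ t)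
    (ht : t ≤ n) : (Fin.snoc u t : Fin (m + 1) → ℕ) ∈ gridSet n (m + 1) := by
  intro i
  induction i using Fin.lastCases with
  | last => simpa using ⟨ht₁, ht⟩
  | cast j => simpa using hu j

theorem diagUnion_eq_sep_dvd_sum {n d : ℕ} (hd : 1 ≤ d) :
    diagUnion n d = {v ∈ gridSet n d | n ∣ ∑ i, v i} := by
  ext v
  simp only [diagUnion, hyperplane, Set.mem_iUnion, Finset.mem_Icc, Set.mem_sep_iff, exists_prop]
  constructor
  · rintro ⟨k, -, hv, hsum⟩
    exact ⟨hv, hsum ▸ dvd_mul_left n k⟩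
  · rintro ⟨hv, k, hk⟩
    obtain ⟨hlo, hhi⟩ := sum_mem_Icc_of_mem_gridSet hv
    have hn : 0 < n := by have := hv ⟨0, hd⟩; omega
    refine ⟨k, ⟨?_, ?_⟩, hv, hk.trans (mul_comm n k)⟩
    · rcases Nat.eq_zero_or_pos k with rfl | hk0
      · omega
      · exact hk0
    · exact Nat.le_of_mul_le_mul_left (by rw [← hk, mul_comm]; exact hhi) hn

theorem ncard_sep_dvd_sum (n m : ℕ) (hn : 1 ≤ n) :
    {v ∈ gridSet n (m + 1) | n ∣ ∑ i, v i}.ncard = n ^ m := by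
  set S := {v ∈ gridSet n (m + 1) | n ∣ ∑ i, v i}
  have last_eq {v} (hv : v ∈ S) : v (Fin.last m) = n - (∑ i, Fin.init v i) % n := by
    have hlast := hv.1 (Fin.last m)
    rw [← Nat.dvd_add_iff_eq_sub_mod hlast.1 hlast.2]
    simpa [Fin.sum_univ_castSucc, Fin.init] using hv.2
  have hinj : S.InjOn Fin.init := by
    intro v hv w hw hvw
    rw [← Fin.snoc_init_self v, ← Fin.snoc_init_self w, last_eq hv, last_eq hw, hvw]
  have himage : Fin.init '' S = gridSet n m := by
    refine Set.Subset.antisymm (Set.image_subset_iff.2 fun v hv => init_mem_gridSet hv.1) ?_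
    intro u hu
    have ht : 1 ≤ n - (∑ i, u i) % n ∧ n - (∑ i, u i) % n ≤ n :=
      ⟨by have := Nat.mod_lt (∑ i, u i) (by omega : 0 < n); omega, Nat.sub_le _ _⟩
    refine ⟨Fin.snoc u (n - (∑ i, u i) % n), ⟨snoc_mem_gridSet hu ht.1 ht.2, ?_⟩, Fin.init_snoc _ _⟩
    simpa [Fin.sum_univ_castSucc] using (Nat.dvd_add_iff_eq_sub_mod ht.1 ht.2).2 rfl
  rw [← hinj.ncard_image, himage, ncard_gridSet]

theorem diagUnion_card (n d : ℕ) (hn : 1 ≤ n) (hd : 1 ≤ d) :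
    (diagUnion n d).ncard = n ^ (d - 1) := by
  obtain ⟨m, rfl⟩ : ∃ m, d = m + 1 := ⟨d - 1, by omega⟩
  rw [diagUnion_eq_sep_dvd_sum hd, Nat.add_sub_cancel, ncard_sep_dvd_sum n m hn]
end

section
/- For all n, d ≥ 1, the minimum size of a percolating set in d-neighbour bootstrap percolation on [n]^d equals n^{d-1}. -/
open Finset Function

namespace GridBootstrap

theorem sum_comp_update_add {ι α M : Type*} [Fintype ι] [DecidableEq ι] [AddCommMonoid M]
    (f : α → M) (v : ι → α) (j : ι) (x : α) :
    ∑ i, f (update v j x i) + f (v j) = ∑ i, f (v i) + f x := by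
  rw [Fintype.sum_eq_add_sum_compl j, Fintype.sum_eq_add_sum_compl j (fun i => f (v i)),
    update_self, sum_congr rfl fun i hi => by rw [update_of_ne (by simpa using hi)]]
  abel

theorem dvd_add_iff_eq_sub_mod {n a b : ℕ} (ha : 1 ≤ a) (han : a ≤ n) :
    n ∣ a + b ↔ a = n - b % n := by
  have hb : b % n < n := Nat.mod_lt b (by omega)
  rw [Nat.dvd_iff_mod_eq_zero, ← Nat.add_mod_mod, ← Nat.dvd_iff_mod_eq_zero]
  constructor
  · intro h
    have := Nat.eq_of_dvd_of_lt_two_mul (by omega) h (by omega)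
    omega
  · intro h
    rw [h, Nat.sub_add_cancel hb.le]

section AdjPairs

variable {α : Type*} [DecidableEq α] (r : α → α → Prop) [DecidableRel r]

def adjPairs (S : Finset α) : ℕ := ∑ u ∈ S, #{w ∈ S | r u w}

variable {r} [Std.Symm r]

theorem adjPairs_add_le_adjPairs_union {S T : Finset α} (hST : Disjoint S T) {k : ℕ}
    (hT : ∀ t ∈ T, k ≤ #{u ∈ S | r u t}) :
    adjPairs r S + 2 * k * #T ≤ adjPairs r (S ∪ T) := by
  have hcross : ∑ u ∈ S, #{w ∈ T | r u w} = ∑ t ∈ T, #{u ∈ S | r u t} := by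
    simp only [card_filter]
    exact sum_comm
  have hsymm : ∑ t ∈ T, #{w ∈ S | r t w} = ∑ t ∈ T, #{u ∈ S | r u t} :=
    sum_congr rfl fun t _ => congrArg card <| filter_congr fun u _ => Std.Symm.iff t u
  have hlow : k * #T ≤ ∑ t ∈ T, #{u ∈ S | r u t} := by
    simpa [mul_comm] using card_nsmul_le_sum T _ k hT
  have hsplit (u : α) : #{w ∈ S ∪ T | r u w} = #{w ∈ S | r u w} + #{w ∈ T | r u w} := by
    rw [filter_union, card_union_of_disjoint (disjoint_filter_filter hST)]
  simp only [adjPairs, sum_union hST, hsplit, sum_add_distrib, hcross, hsymm]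
  rw [mul_assoc]
  omega

end AdjPairs

instance {d : ℕ} : DecidableRel (@gridAdj d) := fun u v => by
  unfold gridAdj
  infer_instance

instance {d : ℕ} : Std.Symm (@gridAdj d) where
  symm _ _ := fun ⟨j, hj, h⟩ => ⟨j, hj.symm, fun i hi => (h i hi).symm⟩

def gridNbr {d : ℕ} (v : Fin d → ℕ) (j : Fin d) (up : Bool) : Fin d → ℕ :=
  update v j (if up then v j + 1 else v j - 1)

section Neighbours

variable {d : ℕ} {v : Fin d → ℕ} {j : Fin d} {up : Bool}

theorem gridNbr_apply_self_ne (hv : 1 ≤ v j) : gridNbr v j up j ≠ v j := by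
  cases up
  · simp [gridNbr]
    omega
  · simp [gridNbr]

theorem gridNbr_apply_of_ne {i : Fin d} (h : i ≠ j) : gridNbr v j up i = v i :=
  update_of_ne h _ _

theorem gridAdj_gridNbr (hv : 1 ≤ v j) : gridAdj (gridNbr v j up) v :=
  ⟨j, by cases up <;> simp [gridNbr]; omega, fun _ hi => gridNbr_apply_of_ne hi⟩

theorem exists_eq_gridNbr_of_gridAdj {u : Fin d → ℕ} (h : gridAdj u v) :
    ∃ j up, u = gridNbr v j up := by
  obtain ⟨j, hj | hj, hne⟩ := h
  · refine ⟨j, true, funext fun i => ?_⟩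
    rcases eq_or_ne i j with rfl | hi
    · simp [gridNbr, hj]
    · rw [gridNbr_apply_of_ne hi, hne i hi]
  · refine ⟨j, false, funext fun i => ?_⟩
    rcases eq_or_ne i j with rfl | hi
    · simp [gridNbr, hj]
    · rw [gridNbr_apply_of_ne hi, hne i hi]

theorem finite_setOf_gridAdj (v : Fin d → ℕ) : {u | gridAdj u v}.Finite :=
  (Set.finite_range fun p : Fin d × Bool => gridNbr v p.1 p.2).subset fun _ hu => by
    obtain ⟨j, up, rfl⟩ := exists_eq_gridNbr_of_gridAdj hu
    exact ⟨(j, up), rfl⟩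

theorem injective_gridNbr (hv : ∀ i, 1 ≤ v i) (up : Fin d → Bool) :
    Injective fun j => gridNbr v j (up j) := by
  intro j k h
  by_contra hjk
  exact gridNbr_apply_self_ne (hv j) ((congrFun h j).trans (gridNbr_apply_of_ne hjk))

theorem gridNbr_mem_gridSet_iff {n : ℕ} (hv : v ∈ gridSet n d) :
    gridNbr v j up ∈ gridSet n d ↔ v j ≠ if up then n else 1 := by
  have hrest : ∀ i ≠ j, 1 ≤ v i ∧ v i ≤ n := fun i _ => hv i
  have := hv j
  change (∀ i, _) ↔ _
  rw [gridNbr, forall_update_iff v (fun _ x => 1 ≤ x ∧ x ≤ n), and_iff_left hrest]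
  cases up <;> simp <;> omega

end Neighbours

def gridFinset (n d : ℕ) : Finset (Fin d → ℕ) := Fintype.piFinset fun _ => Icc 1 n

section GridFinset

variable {n d : ℕ}

@[simp]
theorem coe_gridFinset : (gridFinset n d : Set (Fin d → ℕ)) = gridSet n d := by
  ext v
  simp only [mem_coe, gridFinset, Fintype.mem_piFinset, mem_Icc]
  rfl

theorem mem_gridFinset {v : Fin d → ℕ} : v ∈ gridFinset n d ↔ v ∈ gridSet n d := by
  rw [← mem_coe, coe_gridFinset]

theorem card_gridFinset : #(gridFinset n d) = n ^ d := by
  simp [gridFinset]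

theorem card_filter_gridFinset_apply_eq (j : Fin d) {a : ℕ} (ha : a ∈ Icc 1 n) :
    #{u ∈ gridFinset n d | u j = a} = n ^ (d - 1) := by
  simpa [gridFinset] using Fintype.card_filter_piFinset_const_eq_of_mem (Icc 1 n) j ha

theorem card_filter_gridAdj_le (S : Finset (Fin d → ℕ)) (u : Fin d → ℕ) :
    #{w ∈ S | gridAdj u w} ≤ #{p : Fin d × Bool | gridNbr u p.1 p.2 ∈ S} :=
  card_le_card_of_surjOn (fun p => gridNbr u p.1 p.2) fun w hw => by
    obtain ⟨hwS, huw⟩ := mem_filter.1 hw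
    obtain ⟨j, up, rfl⟩ := exists_eq_gridNbr_of_gridAdj (Std.Symm.symm _ _ huw)
    exact ⟨(j, up), by simpa using hwS, rfl⟩

theorem sum_card_gridNbr_notMem_gridFinset (hn : 1 ≤ n) :
    ∑ u ∈ gridFinset n d, #{p : Fin d × Bool | gridNbr u p.1 p.2 ∉ gridFinset n d} =
      2 * d * n ^ (d - 1) := by
  have hcount (p : Fin d × Bool) :
      #{u ∈ gridFinset n d | gridNbr u p.1 p.2 ∉ gridFinset n d} = n ^ (d - 1) := by
    rw [filter_congr fun u hu => by
      rw [mem_gridFinset, gridNbr_mem_gridSet_iff (mem_gridFinset.1 hu), not_ne_iff]]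
    exact card_filter_gridFinset_apply_eq p.1 (by split_ifs <;> simp [hn])
  calc ∑ u ∈ gridFinset n d, #{p : Fin d × Bool | gridNbr u p.1 p.2 ∉ gridFinset n d}
      = ∑ p : Fin d × Bool, #{u ∈ gridFinset n d | gridNbr u p.1 p.2 ∉ gridFinset n d} := by
        simp only [card_filter]
        exact sum_comm
    _ = 2 * d * n ^ (d - 1) := by
        simp only [hcount, sum_const, card_univ, Fintype.card_prod, Fintype.card_fin,
          Fintype.card_bool, smul_eq_mul]
        ring

theorem adjPairs_gridFinset_add_le (hn : 1 ≤ n) :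
    adjPairs gridAdj (gridFinset n d) + 2 * d * n ^ (d - 1) ≤ 2 * d * n ^ d := by
  have hsplit (u : Fin d → ℕ) : #{p : Fin d × Bool | gridNbr u p.1 p.2 ∈ gridFinset n d} +
      #{p : Fin d × Bool | gridNbr u p.1 p.2 ∉ gridFinset n d} = 2 * d := by
    rw [card_filter_add_card_filter_not]
    simp [mul_comm]
  calc adjPairs gridAdj (gridFinset n d) + 2 * d * n ^ (d - 1)
      ≤ ∑ u ∈ gridFinset n d, (#{p : Fin d × Bool | gridNbr u p.1 p.2 ∈ gridFinset n d} +
          #{p : Fin d × Bool | gridNbr u p.1 p.2 ∉ gridFinset n d}) := by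
        rw [adjPairs, sum_add_distrib, sum_card_gridNbr_notMem_gridFinset hn]
        gcongr with u
        exact card_filter_gridAdj_le _ u
    _ = 2 * d * n ^ d := by
        simp only [hsplit, sum_const, card_gridFinset, smul_eq_mul]
        ring

end GridFinset

section Closure

variable {n d r : ℕ} {A : Set (Fin d → ℕ)}

theorem infected_succ (t : ℕ) :
    infected n d r A (t + 1) = bpStep n d r (infected n d r A t) :=
  iterate_succ_apply' _ _ _

theorem monotone_infected : Monotone (infected n d r A) :=
  monotone_nat_of_le_succ fun t => by
    rw [infected_succ]
    exact Set.subset_union_left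

theorem subset_bpClosure : A ⊆ bpClosure n d r A :=
  Set.subset_iUnion (infected n d r A) 0

theorem infected_subset_gridSet (hA : A ⊆ gridSet n d) (t : ℕ) :
    infected n d r A t ⊆ gridSet n d := by
  induction t with
  | zero => exact hA
  | succ t ih =>
    rw [infected_succ]
    exact Set.union_subset ih fun _ hv => hv.1

theorem exists_subset_infected {F : Set (Fin d → ℕ)} (hF : F.Finite)
    (hFA : F ⊆ bpClosure n d r A) : ∃ t, F ⊆ infected n d r A t := by
  rw [← hF.coe_toFinset] at hFA ⊢
  exact monotone_infected.directed_le.exists_mem_subset_of_finset_subset_biUnion hFA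

theorem bpStep_bpClosure_subset : bpStep n d r (bpClosure n d r A) ⊆ bpClosure n d r A := by
  rintro v (hv | ⟨hv, hcard⟩)
  · exact hv
  have hfin : {u ∈ bpClosure n d r A | gridAdj u v}.Finite :=
    (finite_setOf_gridAdj v).subset fun _ hu => hu.2
  obtain ⟨t, ht⟩ := exists_subset_infected hfin fun _ hu => hu.1
  refine Set.mem_iUnion.2 ⟨t + 1, ?_⟩
  rw [infected_succ]
  refine Or.inr ⟨hv, hcard.trans (Set.ncard_le_ncard (fun u hu => ⟨ht hu, hu.2⟩) ?_)⟩
  exact (finite_setOf_gridAdj v).subset fun _ hu => hu.2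

end Closure

theorem two_mul_card_add_adjPairs_le {n d : ℕ} {S U : Finset (Fin d → ℕ)}
    (hU : (U : Set (Fin d → ℕ)) = bpStep n d d S) :
    2 * d * #U + adjPairs gridAdj S ≤ 2 * d * #S + adjPairs gridAdj U := by
  have hSU : S ⊆ U := by
    rw [← coe_subset, hU]
    exact Set.subset_union_left
  have hdeg : ∀ t ∈ U \ S, d ≤ #{u ∈ S | gridAdj u t} := by
    intro t ht
    obtain ⟨htU, htS⟩ := mem_sdiff.1 ht
    rw [← mem_coe, hU] at htU
    rcases htU with htS' | ⟨-, hcard⟩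
    · exact absurd htS' htS
    · rw [← Set.ncard_coe_finset]
      convert hcard using 2
      ext u
      simp
  have hgrow := adjPairs_add_le_adjPairs_union disjoint_sdiff hdeg
  rw [union_sdiff_of_subset hSU] at hgrow
  rw [← card_sdiff_add_card_eq_card hSU, mul_add]
  omega

theorem le_ncard_of_percolates {n d : ℕ} (hn : 1 ≤ n) (hd : 1 ≤ d) {A : Set (Fin d → ℕ)}
    (hA : A ⊆ gridSet n d) (hperc : percolates n d d A) : n ^ (d - 1) ≤ A.ncard := by
  have hgrid : (gridSet n d).Finite := by
    rw [← coe_gridFinset]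
    exact finite_toSet _
  have hfin (t : ℕ) : (infected n d d A t).Finite := hgrid.subset (infected_subset_gridSet hA t)
  have hinv (t : ℕ) :
      2 * d * #(hfin t).toFinset ≤ 2 * d * A.ncard + adjPairs gridAdj (hfin t).toFinset := by
    induction t with
    | zero =>
      rw [← Set.ncard_eq_toFinset_card _ (hfin 0)]
      exact Nat.le_add_right _ _
    | succ t ih =>
      have := two_mul_card_add_adjPairs_le (n := n) (S := (hfin t).toFinset)
        (U := (hfin (t + 1)).toFinset) (by simp [infected_succ])
      omega
  obtain ⟨T, hT⟩ := exists_subset_infected hgrid hperc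
  have hfinal : (hfin T).toFinset = gridFinset n d := by
    rw [← coe_inj, coe_gridFinset, Set.Finite.coe_toFinset]
    exact (infected_subset_gridSet hA T).antisymm hT
  have hgridPairs := adjPairs_gridFinset_add_le (d := d) hn
  have := hinv T
  rw [hfinal, card_gridFinset] at this
  exact Nat.le_of_mul_le_mul_left (by omega : 2 * d * n ^ (d - 1) ≤ 2 * d * A.ncard) (by omega)

section Diagonal

variable {n d : ℕ}

theorem diagUnion_subset_gridSet : diagUnion n d ⊆ gridSet n d :=
  Set.iUnion₂_subset fun _ _ => Set.sep_subset _ _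

theorem mem_diagUnion_iff (hn : 1 ≤ n) (hd : 1 ≤ d) {v : Fin d → ℕ} :
    v ∈ diagUnion n d ↔ v ∈ gridSet n d ∧ n ∣ ∑ i, v i := by
  simp only [diagUnion, hyperplane, Set.mem_iUnion, mem_Icc, Set.mem_ofPred_eq, exists_prop]
  constructor
  · rintro ⟨k, -, hv, hsum⟩
    exact ⟨hv, hsum ▸ dvd_mul_left n k⟩
  · rintro ⟨hv, k, hk⟩
    have hlo : d ≤ ∑ i, v i := by simpa using sum_le_sum (s := univ) fun i _ => (hv i).1
    have hhi : ∑ i, v i ≤ d * n := by simpa using sum_le_sum (s := univ) fun i _ => (hv i).2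
    refine ⟨k, ⟨?_, Nat.le_of_mul_le_mul_left (by linarith) hn⟩, hv, by rw [hk, mul_comm]⟩
    rcases Nat.eq_zero_or_pos k with rfl | hk0
    · omega
    · exact hk0

theorem card_filter_dvd_sum_gridFinset (hn : 1 ≤ n) (m : ℕ) :
    #{v ∈ gridFinset n (m + 1) | n ∣ ∑ i, v i} = n ^ m := by
  rw [← card_gridFinset (n := n) (d := m)]
  refine card_nbij' Fin.tail (fun x => Fin.cons (n - (∑ i, x i) % n) x) ?_ ?_ ?_ ?_
  · intro v hv
    simp only [coe_filter, mem_coe, gridFinset, Fintype.mem_piFinset, Set.mem_ofPred_eq] at hv ⊢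
    exact fun i => hv.1 i.succ
  · intro x hx
    simp only [coe_filter, mem_coe, gridFinset, Fintype.mem_piFinset, Set.mem_ofPred_eq] at hx ⊢
    have hr : (∑ i, x i) % n < n := Nat.mod_lt _ hn
    refine ⟨Fin.cases (by simp; omega) hx, ?_⟩
    rw [Fin.sum_cons]
    exact (dvd_add_iff_eq_sub_mod (by omega) (by omega)).2 rfl
  · intro v hv
    simp only [coe_filter, gridFinset, Fintype.mem_piFinset, mem_Icc, Set.mem_ofPred_eq] at hv
    obtain ⟨hv, hdvd⟩ := hv
    rw [Fin.sum_univ_succ, dvd_add_iff_eq_sub_mod (hv 0).1 (hv 0).2] at hdvd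
    conv_rhs => rw [← Fin.cons_self_tail v, hdvd]
    rfl
  · intro x _
    simp

theorem ncard_diagUnion (hn : 1 ≤ n) (hd : 1 ≤ d) : (diagUnion n d).ncard = n ^ (d - 1) := by
  obtain ⟨m, rfl⟩ : ∃ m, d = m + 1 := ⟨d - 1, by omega⟩
  have hdiag : diagUnion n (m + 1) = ↑({v ∈ gridFinset n (m + 1) | n ∣ ∑ i, v i}) := by
    ext v
    simp [mem_diagUnion_iff hn hd, mem_gridFinset]
  rw [hdiag, Set.ncard_coe_finset, card_filter_dvd_sum_gridFinset hn, Nat.add_sub_cancel]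

end Diagonal

/- The step `2 * (n - 1 - s)` from residue `s` to `s + 1` is less than the drop `2 * (n - v j) - 1`
of `(n - v j) ^ 2` when raising `v j ≤ s`, and the step `2 * (n - s)` into residue `s` exceeds its
rise `2 * (n - v j) + 1` when lowering `v j > s`. -/
def residueCost (n s : ℕ) : ℕ := ∑ k ∈ range s, 2 * (n - 1 - k)

theorem residueCost_succ_mod_le {n s : ℕ} (hs : s < n) :
    residueCost n ((s + 1) % n) ≤ residueCost n s + 2 * (n - 1 - s) := by
  unfold residueCost
  rcases Nat.lt_or_ge (s + 1) n with h | h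
  · rw [Nat.mod_eq_of_lt h, sum_range_succ]
  · rw [show s + 1 = n by omega, Nat.mod_self, sum_range_zero]
    exact Nat.zero_le _

theorem residueCost_pred_add {n s : ℕ} (hs : 0 < s) :
    residueCost n (s - 1) + 2 * (n - s) = residueCost n s := by
  obtain ⟨s, rfl⟩ : ∃ t, s = t + 1 := ⟨s - 1, by omega⟩
  rw [residueCost, residueCost, sum_range_succ, Nat.add_sub_cancel]
  congr 2
  omega

def potential {d : ℕ} (n : ℕ) (v : Fin d → ℕ) : ℕ :=
  ∑ i, (n - v i) ^ 2 + residueCost n ((∑ i, v i) % n)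

section Potential

variable {n d : ℕ} {v : Fin d → ℕ} {j : Fin d}

theorem potential_gridNbr_up_lt (hv : v ∈ gridSet n d) (hj : v j ≤ (∑ i, v i) % n) :
    potential n (gridNbr v j true) < potential n v := by
  set s := (∑ i, v i) % n with hs
  have hsn : s < n := Nat.mod_lt _ (by have := hv j; omega)
  have hup : gridNbr v j true = update v j (v j + 1) := by simp [gridNbr]
  have hsum := sum_comp_update_add id v j (v j + 1)
  have hsq := sum_comp_update_add (fun x => (n - x) ^ 2) v j (v j + 1)
  simp only [id] at hsum hsq
  have hres : (∑ i, update v j (v j + 1) i) % n = (s + 1) % n := by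
    rw [hs, Nat.mod_add_mod]
    congr 1
    omega
  have hcost := residueCost_succ_mod_le hsn
  have hkey : (n - (v j + 1)) ^ 2 + 2 * (n - 1 - s) < (n - v j) ^ 2 := by
    obtain ⟨c, hc⟩ : ∃ c, n - v j = c + 1 := ⟨n - v j - 1, by omega⟩
    rw [hc, show n - (v j + 1) = c by omega, add_sq]
    omega
  rw [hup, potential, potential, hres, ← hs]
  omega

theorem potential_gridNbr_down_lt (hv : v ∈ gridSet n d) (hs : 0 < (∑ i, v i) % n)
    (hj : (∑ i, v i) % n < v j) : potential n (gridNbr v j false) < potential n v := by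
  set s := (∑ i, v i) % n with hs_def
  have hvj := hv j
  have hdown : gridNbr v j false = update v j (v j - 1) := by simp [gridNbr]
  have hsum := sum_comp_update_add id v j (v j - 1)
  have hsq := sum_comp_update_add (fun x => (n - x) ^ 2) v j (v j - 1)
  simp only [id] at hsum hsq
  have hres : (∑ i, update v j (v j - 1) i) % n = s - 1 := by
    have := Nat.div_add_mod (∑ i, v i) n
    rw [show ∑ i, update v j (v j - 1) i = n * ((∑ i, v i) / n) + (s - 1) by omega,
      Nat.mul_add_mod, Nat.mod_eq_of_lt (by omega)]
  have hcost := residueCost_pred_add (n := n) hs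
  have hkey : (n - (v j - 1)) ^ 2 < (n - v j) ^ 2 + 2 * (n - s) := by
    rw [show n - (v j - 1) = n - v j + 1 by omega, add_sq]
    omega
  rw [hdown, potential, potential, hres, ← hs_def]
  omega

def descentNbr (n : ℕ) (v : Fin d → ℕ) (j : Fin d) : Fin d → ℕ :=
  gridNbr v j (decide (v j ≤ (∑ i, v i) % n))

theorem potential_descentNbr_lt (hv : v ∈ gridSet n d) (hs : ¬n ∣ ∑ i, v i) (j : Fin d) :
    potential n (descentNbr n v j) < potential n v := by
  have hs0 : 0 < (∑ i, v i) % n := Nat.pos_of_ne_zero (mt Nat.dvd_of_mod_eq_zero hs)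
  by_cases hj : v j ≤ (∑ i, v i) % n
  · simpa [descentNbr, hj] using potential_gridNbr_up_lt hv hj
  · simpa [descentNbr, hj] using potential_gridNbr_down_lt hv hs0 (not_le.1 hj)

theorem descentNbr_mem_gridSet (hv : v ∈ gridSet n d) (hs : ¬n ∣ ∑ i, v i) (j : Fin d) :
    descentNbr n v j ∈ gridSet n d := by
  have hs0 : 0 < (∑ i, v i) % n := Nat.pos_of_ne_zero (mt Nat.dvd_of_mod_eq_zero hs)
  have hsn : (∑ i, v i) % n < n := Nat.mod_lt _ (by have := hv j; omega)
  rw [descentNbr, gridNbr_mem_gridSet_iff hv]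
  by_cases hj : v j ≤ (∑ i, v i) % n <;> simp [hj] <;> omega

end Potential

theorem percolates_diagUnion {n d : ℕ} (hn : 1 ≤ n) (hd : 1 ≤ d) :
    percolates n d d (diagUnion n d) := by
  intro v hv
  induction hP : potential n v using Nat.strong_induction_on generalizing v with
  | _ N ih =>
  by_cases hs : n ∣ ∑ i, v i
  · exact subset_bpClosure ((mem_diagUnion_iff hn hd).2 ⟨hv, hs⟩)
  refine bpStep_bpClosure_subset (Or.inr ⟨hv, ?_⟩)
  have hnbrs : Set.range (descentNbr n v) ⊆
      {u ∈ bpClosure n d d (diagUnion n d) | gridAdj u v} := by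
    rintro _ ⟨j, rfl⟩
    exact ⟨ih _ (hP ▸ potential_descentNbr_lt hv hs j) (descentNbr_mem_gridSet hv hs j) rfl,
      gridAdj_gridNbr (hv j).1⟩
  have hinj : Injective (descentNbr n v) := injective_gridNbr (fun i => (hv i).1) _
  calc d = (Set.range (descentNbr n v)).ncard := by
        rw [Set.ncard_range_of_injective hinj, Nat.card_fin]
    _ ≤ _ := Set.ncard_le_ncard hnbrs ((finite_setOf_gridAdj v).subset fun _ hu => hu.2)

end GridBootstrap

theorem smallest_percolating_set (n d : ℕ) (hn : 1 ≤ n) (hd : 1 ≤ d) :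
    IsLeast {k : ℕ | ∃ A : Set (Fin d → ℕ),
      A ⊆ gridSet n d ∧ percolates n d d A ∧ A.ncard = k} (n ^ (d - 1)) := by
  constructor
  · exact ⟨diagUnion n d, GridBootstrap.diagUnion_subset_gridSet,
      GridBootstrap.percolates_diagUnion hn hd, GridBootstrap.ncard_diagUnion hn hd⟩
  · rintro k ⟨A, hA, hperc, rfl⟩
    exact GridBootstrap.le_ncard_of_percolates hn hd hA hperc
end

section
/- Let d ≥ 1 and n ≥ 1, and suppose V_{(⌈d/n⌉-1)n} ∩ [n]^d = ∅ (i.e., no vertex of [n]^d has coordinate sum (⌈d/n⌉-1)n). If the hyperplane V_{⌈d/n⌉ n} is infected, then in d-neighbour bootstrap percolation all vertices of [n]^d with coordinate sum strictly less than ⌈d/n⌉ n become infected; moreover, every vertex in V_{⌈d/n⌉ n - j} becomes infected within j steps. -/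
open Finset

lemma finite_setOf_gridAdj {d : ℕ} (v : Fin d → ℕ) : {u | gridAdj u v}.Finite := by
  refine (Set.Finite.pi fun i => Set.finite_Iic (v i + 1)).subset ?_
  rintro u ⟨j, hj, hoth⟩ i -
  by_cases hij : i = j
  · subst hij; simp only [Set.mem_Iic]; omega
  · simp [hoth i hij]

lemma infected_succ (n d r : ℕ) (A : Set (Fin d → ℕ)) (t : ℕ) :
    infected n d r A (t + 1) = bpStep n d r (infected n d r A t) :=
  Function.iterate_succ_apply' _ _ _

lemma gridAdj_add_single {d : ℕ} (v : Fin d → ℕ) (i : Fin d) :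
    gridAdj (v + Pi.single i 1) v :=
  ⟨i, Or.inl (by simp), fun j hj => by simp [hj]⟩

lemma sum_add_single {d : ℕ} (v : Fin d → ℕ) (i : Fin d) :
    ∑ j, (v + Pi.single i 1 : Fin d → ℕ) j = ∑ j, v j + 1 := by
  simp [sum_add_distrib]

lemma add_single_mem_gridSet {n d : ℕ} {v : Fin d → ℕ} (hv : v ∈ gridSet n d) {i : Fin d}
    (hi : v i < n) : v + Pi.single i 1 ∈ gridSet n d := by
  intro j
  by_cases hji : j = i
  · subst hji; simp; omega
  · simpa [hji] using hv j

lemma le_sum_of_mem_gridSet {n d : ℕ} {v : Fin d → ℕ} (hv : v ∈ gridSet n d) :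
    d ≤ ∑ i, v i := by
  simpa using card_nsmul_le_sum univ v 1 fun i _ => (hv i).1

lemma lt_of_mem_gridSet_of_sum_lt {n d : ℕ} {v : Fin d → ℕ} (hv : v ∈ gridSet n d)
    (hsum : ∑ i, v i < d + n - 1) (i : Fin d) : v i < n := by
  have hrest : d - 1 ≤ ∑ j ∈ univ.erase i, v j := by
    simpa [card_erase_of_mem] using
      card_nsmul_le_sum (univ.erase i) v 1 fun j _ => (hv j).1
  have := add_sum_erase univ v (mem_univ i)
  have := (hv i).2
  omega

lemma mem_bpStep_of_add_single_mem {n d : ℕ} {S : Set (Fin d → ℕ)} {v : Fin d → ℕ}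
    (hv : v ∈ gridSet n d) (hup : ∀ i, v + Pi.single i 1 ∈ S) : v ∈ bpStep n d d S := by
  refine Or.inr ⟨hv, ?_⟩
  have hinj : Set.InjOn (fun i => v + Pi.single i 1) Set.univ := by
    intro i _ i' _ h
    by_contra hne
    simpa [hne] using congrFun h i
  simpa using Set.ncard_le_ncard_of_injOn (t := {u ∈ S | gridAdj u v}) _
    (fun i _ => ⟨hup i, gridAdj_add_single v i⟩) hinj
    ((finite_setOf_gridAdj v).subset fun u hu => hu.2)

theorem mem_infected_hyperplane {n d k : ℕ} (hk : k ≤ d + n - 1) (j : ℕ) :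
    ∀ v ∈ gridSet n d, ∑ i, v i = k - j → v ∈ infected n d d (hyperplane n d k) j := by
  induction j with
  | zero => exact fun v hv hsum => ⟨hv, hsum⟩
  | succ j ih =>
    intro v hv hsum
    rw [infected_succ]
    refine mem_bpStep_of_add_single_mem hv fun i => ?_
    have hd := le_sum_of_mem_gridSet hv
    -- `i` exists, so `d ≥ 1` and `∑ v ≥ 1`: the truncated `k - (j + 1)` is exact.
    have hpos : 0 < d := i.pos
    have hlt : ∑ i, v i < d + n - 1 := by omega
    exact ih _ (add_single_mem_gridSet hv (lt_of_mem_gridSet_of_sum_lt hv hlt i))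
      (by rw [sum_add_single]; omega)

theorem mem_bpClosure_hyperplane {n d k : ℕ} (hk : k ≤ d + n - 1) {v : Fin d → ℕ}
    (hv : v ∈ gridSet n d) (hsum : ∑ i, v i ≤ k) :
    v ∈ bpClosure n d d (hyperplane n d k) :=
  Set.mem_iUnion.mpr ⟨k - ∑ i, v i, mem_infected_hyperplane hk _ v hv (by omega)⟩

theorem bottom_corner_general (n d : ℕ) :
    (∀ v ∈ gridSet n d, (∑ i, v i) < ((d + n - 1) / n) * n →
      v ∈ bpClosure n d d (hyperplane n d (((d + n - 1) / n) * n))) ∧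
    (∀ j : ℕ, ∀ v ∈ gridSet n d, (∑ i, v i) = ((d + n - 1) / n) * n - j →
      v ∈ infected n d d (hyperplane n d (((d + n - 1) / n) * n)) j) := by
  have hk : (d + n - 1) / n * n ≤ d + n - 1 := Nat.div_mul_le_self _ _
  exact ⟨fun v hv hsum => mem_bpClosure_hyperplane hk hv hsum.le, mem_infected_hyperplane hk⟩

theorem bottom_corner (n d : ℕ) (hn : 1 ≤ n) (hd : 1 ≤ d)
    (hempty : hyperplane n d (((d + n - 1) / n - 1) * n) = ∅) :
    (∀ v ∈ gridSet n d, (∑ i, v i) < ((d + n - 1) / n) * n →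
      v ∈ bpClosure n d d (hyperplane n d (((d + n - 1) / n) * n))) ∧
    (∀ j : ℕ, ∀ v ∈ gridSet n d, (∑ i, v i) = ((d + n - 1) / n) * n - j →
      v ∈ infected n d d (hyperplane n d (((d + n - 1) / n) * n)) j) :=
  bottom_corner_general n d
end

section
/- Fix n, d, s with 1 + ⌈d/n⌉ ≤ s ≤ d, let F_s = ⋃_{i=1}^{n-1} V_{(s-1)n+i}, and for v ∈ F_s define t_v = Σ v_i − (s−1)n and Pre(v) = {v + e_j : v_j ≤ t_v} ∪ {v − e_j : v_j > t_v}. Then there is no finite sequence u^1, ..., u^m, u^{m+1} = u^1 with m ≥ 1, all u^i ∈ F_s, and u^{i+1} ∈ Pre(u^i) for all 1 ≤ i ≤ m. Equivalently, the directed relation u → w for w ∈ Pre(u) restricted to F_s is acyclic. -/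
/-- The slab `F_s = ⋃_{i=1}^{n-1} V_{(s-1)n+i}`. -/
def Fs (n d s : ℕ) : Set (Fin d → ℕ) :=
  ⋃ i ∈ Finset.Icc 1 (n - 1), hyperplane n d ((s - 1) * n + i)

/-- `t_v = Σ v_i − (s−1)n`. -/
def tv (n s : ℕ) {d : ℕ} (v : Fin d → ℕ) : ℕ := (∑ i, v i) - (s - 1) * n

/-- The `j`-th standard basis vector. -/
def eVec (d : ℕ) (j : Fin d) : Fin d → ℕ := fun i => if i = j then 1 else 0

/-- `Pre(v) = {v + e_j : v_j ≤ t_v} ∪ {v − e_j : v_j > t_v}`. -/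
def Pre (n s : ℕ) {d : ℕ} (v : Fin d → ℕ) : Set (Fin d → ℕ) :=
  {w | ∃ j, (v j ≤ tv n s v ∧ w = v + eVec d j) ∨ (tv n s v < v j ∧ w = v - eVec d j)}

/-!
The potential `Φ(v) = Σ_k v_k (v_k - 1) - (Σ_k v_k - (s-1)n)²` drops by at least one along every
step `v → w ∈ Pre(v)` with `Σ_k v_k ≥ (s-1)n`, i.e. whenever `t_v = Σ_k v_k - (s-1)n` is an honest
difference. Raising `v_j` changes `Φ` by `2 v_j - 2 t_v - 1 ≤ -1` because `v_j ≤ t_v`; lowering it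
changes `Φ` by `2 t_v - 2 v_j + 1 ≤ -1` because `v_j > t_v`. So `Φ` strictly decreases around any
cycle in `F_s`, which is absurd.
-/

open Finset Function

theorem Fintype.sum_comp_update {ι α M : Type*} [Fintype ι] [DecidableEq ι] [AddCommGroup M]
    (g : α → M) (v : ι → α) (j : ι) (x : α) :
    ∑ k, g (update v j x k) = ∑ k, g (v k) + (g x - g (v j)) := by
  simp only [← comp_apply (f := g), comp_update]
  rw [sum_update_of_mem (mem_univ j), sdiff_singleton_eq_erase, sum_erase_eq_sub (mem_univ j)]
  simp only [comp_apply]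
  abel

theorem add_eVec_eq_update {d : ℕ} (v : Fin d → ℕ) (j : Fin d) :
    v + eVec d j = update v j (v j + 1) := by
  ext i; by_cases h : i = j <;> simp [eVec, h]

theorem sub_eVec_eq_update {d : ℕ} (v : Fin d → ℕ) (j : Fin d) :
    v - eVec d j = update v j (v j - 1) := by
  ext i; by_cases h : i = j <;> simp [eVec, h]

def prePotential {d : ℕ} (c : ℤ) (v : Fin d → ℕ) : ℤ :=
  ∑ k, (v k : ℤ) * (v k - 1) - (∑ k, (v k : ℤ) - c) ^ 2

theorem prePotential_lt_of_mem_Pre {n s d : ℕ} {v w : Fin d → ℕ}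
    (hv : (s - 1) * n ≤ ∑ k, v k) (hw : w ∈ Pre n s v) :
    prePotential ((s - 1) * n : ℕ) w < prePotential ((s - 1) * n : ℕ) v := by
  have ht : (tv n s v : ℤ) = ∑ k, (v k : ℤ) - ((s - 1) * n : ℕ) := by
    rw [tv, Nat.cast_sub hv]; push_cast; rfl
  have hsq := Fintype.sum_comp_update (fun x : ℕ => (x : ℤ) * (x - 1)) v
  have hsum := Fintype.sum_comp_update (Nat.cast : ℕ → ℤ) v
  obtain ⟨j, ⟨hle, rfl⟩ | ⟨hlt, rfl⟩⟩ := hw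
  · rw [add_eVec_eq_update]
    have hle : (v j : ℤ) ≤ tv n s v := by exact_mod_cast hle
    simp only [prePotential, hsq, hsum, Nat.cast_add, Nat.cast_one]
    linarith
  · rw [sub_eVec_eq_update]
    have hlt : (tv n s v : ℤ) < v j := by exact_mod_cast hlt
    have hpos : ((v j - 1 : ℕ) : ℤ) = v j - 1 := by omega
    simp only [prePotential, hsq, hsum, hpos]
    linarith

theorem le_sum_of_mem_Fs {n d s : ℕ} {v : Fin d → ℕ} (hv : v ∈ Fs n d s) :
    (s - 1) * n ≤ ∑ k, v k := by
  simp only [Fs, hyperplane, Set.mem_iUnion, Set.mem_ofPred_eq] at hv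
  obtain ⟨i, -, -, hsum⟩ := hv
  omega

theorem Pre_acyclic_general (n d s : ℕ) :
    ¬ ∃ (m : ℕ) (u : ℕ → (Fin d → ℕ)), 1 ≤ m ∧
      (∀ i < m, u i ∈ Fs n d s) ∧
      (∀ i < m, u (i + 1) ∈ Pre n s (u i)) ∧
      u m = u 0 := by
  rintro ⟨m, u, hm, hF, hP, hcyc⟩
  have hanti : StrictAntiOn (fun i => prePotential ((s - 1) * n : ℕ) (u i)) (Set.Iic m) :=
    strictAntiOn_Iic_of_succ_lt fun i hi =>
      prePotential_lt_of_mem_Pre (le_sum_of_mem_Fs (hF i hi)) (hP i hi)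
  exact (hanti (Set.mem_Iic.2 m.zero_le) (Set.mem_Iic.2 le_rfl) hm).ne (congrArg _ hcyc)

theorem Pre_acyclic (n d s : ℕ) (hn : 1 ≤ n)
    (hs1 : 1 + (d + n - 1) / n ≤ s) (hs2 : s ≤ d) :
    ¬ ∃ (m : ℕ) (u : ℕ → (Fin d → ℕ)), 1 ≤ m ∧
      (∀ i < m, u i ∈ Fs n d s) ∧
      (∀ i < m, u (i + 1) ∈ Pre n s (u i)) ∧
      u m = u 0 :=
  Pre_acyclic_general n d s
end

section
/- Fix n, d, s with 1 + ⌈d/n⌉ ≤ s ≤ d and let F_s, t_v, Pre(v) be as in the infection witness tree construction. Then every directed path u^1, u^2, ..., u^m with u^{i} ∈ Pre(u^{i-1}) for all 2 ≤ i ≤ m and u^1 ∈ F_s satisfies m ≤ (d+2)n^2 + n + 1. -/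
/-! A step `v ↦ v + c eⱼ` with `c = ±1` changes `Φ(v) = ∑ vᵢ² - t_v (t_v + 1)` by `c (2 (vⱼ - t_v) - 1)`,
which the rule defining `Pre` makes at most `-1`. On `F_s` the coordinates lie in `[1, n]` and
`1 ≤ t_v ≤ n - 1`, so `Φ` ranges over `[d - (n - 1) n, d n² - 2]` there; comparing `u¹` with `u^{m-1}`
gives `m - 2 ≤ (d n² - 2) - (d - (n - 1) n)`. -/

section QuadPotential

variable {ι : Type*} [Fintype ι] [DecidableEq ι]

def quadPotential (b : ℤ) (x : ι → ℤ) : ℤ :=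
  ∑ i, x i ^ 2 - (∑ i, x i - b) * (∑ i, x i - b + 1)

lemma quadPotential_add_single (b : ℤ) (x : ι → ℤ) (j : ι) (c : ℤ) :
    quadPotential b (x + Pi.single j c) =
      quadPotential b x + c * (2 * (x j - (∑ i, x i - b)) - 1) := by
  have hsum : ∑ i, (x + Pi.single j c : ι → ℤ) i = ∑ i, x i + c := by
    simp [Finset.sum_add_distrib]
  have hsq : ∑ i, (x + Pi.single j c : ι → ℤ) i ^ 2 = ∑ i, x i ^ 2 + 2 * c * x j + c ^ 2 := by
    have hpt : ∀ i, (x + Pi.single j c : ι → ℤ) i ^ 2 =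
        x i ^ 2 + (Pi.single j (2 * c * x j + c ^ 2) : ι → ℤ) i := by
      intro i
      rcases eq_or_ne i j with rfl | hij
      · simp only [Pi.add_apply, Pi.single_eq_same]; ring
      · simp [hij]
    simp only [hpt, Finset.sum_add_distrib, Finset.sum_pi_single', Finset.mem_univ, if_true]
    ring
  simp only [quadPotential, hsum, hsq]
  ring

end QuadPotential

lemma cast_add_eVec {d : ℕ} (v : Fin d → ℕ) (j : Fin d) :
    (fun i => ((v + eVec d j) i : ℤ)) = (fun i => (v i : ℤ)) + Pi.single j 1 := by
  ext i
  rcases eq_or_ne i j with rfl | hij <;> simp [eVec, *]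

lemma cast_sub_eVec {d : ℕ} {v : Fin d → ℕ} {j : Fin d} (hj : 1 ≤ v j) :
    (fun i => ((v - eVec d j) i : ℤ)) = (fun i => (v i : ℤ)) + Pi.single j (-1) := by
  ext i
  rcases eq_or_ne i j with rfl | hij
  · simp only [Pi.sub_apply, eVec, ↓reduceIte, Pi.add_apply, Pi.single_eq_same]; omega
  · simp [eVec, hij]

lemma quadPotential_add_one_le_of_mem_Pre {n s d : ℕ} {v w : Fin d → ℕ}
    (hv : (s - 1) * n ≤ ∑ i, v i) (hw : w ∈ Pre n s v) :
    quadPotential ((s - 1) * n : ℕ) (fun i => (w i : ℤ)) + 1 ≤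
      quadPotential ((s - 1) * n : ℕ) (fun i => (v i : ℤ)) := by
  have htv : (tv n s v : ℤ) = ∑ i, (v i : ℤ) - ((s - 1) * n : ℕ) := by
    rw [tv, Nat.cast_sub hv, Nat.cast_sum]
  obtain ⟨j, ⟨hj, rfl⟩ | ⟨hj, rfl⟩⟩ := hw
  · rw [cast_add_eVec, quadPotential_add_single]
    have : (v j : ℤ) ≤ tv n s v := by exact_mod_cast hj
    linarith
  · rw [cast_sub_eVec (by omega), quadPotential_add_single]
    have : (tv n s v : ℤ) < v j := by exact_mod_cast hj
    linarith

lemma mem_Fs_iff {n d s : ℕ} {v : Fin d → ℕ} :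
    v ∈ Fs n d s ↔ v ∈ gridSet n d ∧ ∃ t ∈ Finset.Icc 1 (n - 1), ∑ i, v i = (s - 1) * n + t := by
  simp only [Fs, hyperplane, Set.mem_iUnion, Set.mem_sep_iff, exists_prop]
  tauto

lemma sum_sq_mem_Icc_of_mem_gridSet {n d : ℕ} {v : Fin d → ℕ} (hv : v ∈ gridSet n d) :
    ∑ i, (v i : ℤ) ^ 2 ∈ Set.Icc (d : ℤ) (d * n ^ 2) := by
  have hbounds : ∀ i, 1 ≤ (v i : ℤ) ^ 2 ∧ (v i : ℤ) ^ 2 ≤ n ^ 2 := fun i => by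
    have h1 : (1 : ℤ) ≤ v i := by exact_mod_cast (hv i).1
    have h2 : (v i : ℤ) ≤ n := by exact_mod_cast (hv i).2
    constructor <;> nlinarith
  constructor
  · simpa using Finset.card_nsmul_le_sum Finset.univ _ 1 fun i _ => (hbounds i).1
  · simpa using Finset.sum_le_card_nsmul Finset.univ _ _ fun i _ => (hbounds i).2

lemma quadPotential_mem_Icc_of_mem_Fs {n d s : ℕ} {v : Fin d → ℕ} (hv : v ∈ Fs n d s) :
    quadPotential ((s - 1) * n : ℕ) (fun i => (v i : ℤ)) ∈
      Set.Icc ((d : ℤ) - (n - 1) * n) (d * n ^ 2 - 2) := by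
  obtain ⟨hgrid, t, ht, hsum⟩ := mem_Fs_iff.mp hv
  obtain ⟨ht1, htn⟩ := Finset.mem_Icc.mp ht
  have hT : ∑ i, (v i : ℤ) - ((s - 1) * n : ℕ) = t := by
    rw [← Nat.cast_sum, hsum]; push_cast; ring
  have ht1' : (1 : ℤ) ≤ t := by exact_mod_cast ht1
  have htn' : (t : ℤ) ≤ n - 1 := by omega
  obtain ⟨hlo, hhi⟩ := sum_sq_mem_Icc_of_mem_gridSet hgrid
  simp only [quadPotential, hT, Set.mem_Icc]
  constructor <;> nlinarith

lemma apply_add_le_apply_zero {f : ℕ → ℤ} {m : ℕ} (hf : ∀ i, i + 1 < m → f (i + 1) + 1 ≤ f i) :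
    ∀ k, k < m → f k + k ≤ f 0
  | 0, _ => by simp
  | k + 1, hk => by
    have := apply_add_le_apply_zero hf k (by omega)
    have := hf k hk
    push_cast
    linarith

theorem witness_tree_path_bound_general (n d s : ℕ)
    (m : ℕ) (u : ℕ → (Fin d → ℕ))
    (h0 : u 0 ∈ Fs n d s)
    (hF : ∀ i, i + 1 < m → u i ∈ Fs n d s)
    (hstep : ∀ i, i + 1 < m → u (i + 1) ∈ Pre n s (u i)) :
    m ≤ (d + 2) * n ^ 2 + n + 1 := by
  rcases lt_or_ge m 2 with hm | hm
  · nlinarith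
  set Φ : ℕ → ℤ := fun k => quadPotential ((s - 1) * n : ℕ) (fun i => (u k i : ℤ))
  have hdecr : ∀ i, i + 1 < m → Φ (i + 1) + 1 ≤ Φ i := fun i hi => by
    obtain ⟨_, t, _, hsum⟩ := mem_Fs_iff.mp (hF i hi)
    exact quadPotential_add_one_le_of_mem_Pre (by omega) (hstep i hi)
  have htele := apply_add_le_apply_zero hdecr (m - 2) (by omega)
  have hstart := (quadPotential_mem_Icc_of_mem_Fs h0).2
  have hend := (quadPotential_mem_Icc_of_mem_Fs (hF (m - 2) (by omega))).1
  have hm' : ((m - 2 : ℕ) : ℤ) = m - 2 := by omega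
  have : (m : ℤ) ≤ (d + 2) * n ^ 2 + n + 1 := by nlinarith
  exact_mod_cast this

theorem witness_tree_path_bound (n d s : ℕ) (hn : 1 ≤ n)
    (hs1 : 1 + (d + n - 1) / n ≤ s) (hs2 : s ≤ d)
    (m : ℕ) (hm : 1 ≤ m) (u : ℕ → (Fin d → ℕ))
    (h0 : u 0 ∈ Fs n d s)
    (hF : ∀ i, i + 1 < m → u i ∈ Fs n d s)
    (hstep : ∀ i, i + 1 < m → u (i + 1) ∈ Pre n s (u i)) :
    m ≤ (d + 2) * n ^ 2 + n + 1 :=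
  witness_tree_path_bound_general n d s m u h0 hF hstep
end

section
/- Let m(T_n^3) be the minimum size of a percolating set in 3-neighbour bootstrap percolation on the 3-dimensional discrete torus T_n^3 = (Z/nZ)^3. Then for all n ≥ 3, m(T_n^3) ≤ n^2 − 2n + 4. -/
/-!
The seed is the plane `x = y + z` without its points on `y = 0` or `z = 0`, plus `(1, 1, 0)` and
`(1, 0, 1)`. In the cube `y, z ≠ 0` the plane spreads along the `x`-lines: a point `k` steps above
it has its `x - 1`, `y + 1`, `z + 1` neighbours `k - 1` steps above it, and symmetrically below, so
only the wedge `min y z ≤ x ≤ max y z` is left. The wedge is filled slab by slab in `x`: in slab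
`x + 1`, the points with `x + 1 = max y z` have two neighbours outside the wedge and one in slab `x`,
except that the diagonal point also needs `(x + 1, x, x + 1)`, which for `x = 0` is a seed point;
the rest follows by induction on `max y z - min y z`. Finally each point of the face `y = 0` has its
neighbours `y = ±1` in the cube, so the face fills from `(1, 0, 1)`, the face `z = 0` likewise from
`(1, 1, 0)`, and then the line `y = z = 0`.
-/

/-- Torus adjacency on `(ℤ/nℤ)^d`: differ by `±1 (mod n)` in exactly one coordinate. -/
def torusAdj {n d : ℕ} (u v : Fin d → ZMod n) : Prop :=
  ∃ j, (u j = v j + 1 ∨ v j = u j + 1) ∧ ∀ i, i ≠ j → u i = v i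

/-- One round of `r`-neighbour bootstrap percolation on the torus. -/
def torusStep (n d r : ℕ) (S : Set (Fin d → ZMod n)) : Set (Fin d → ZMod n) :=
  S ∪ {v | r ≤ {u ∈ S | torusAdj u v}.ncard}

/-- `A` percolates the torus if every vertex is eventually infected. -/
def torusPercolates (n d r : ℕ) (A : Set (Fin d → ZMod n)) : Prop :=
  ∀ v, v ∈ ⋃ t, (torusStep n d r)^[t] A

open Set Function

def torusSpan (n d r : ℕ) (A : Set (Fin d → ZMod n)) : Set (Fin d → ZMod n) :=
  ⋃ t, (torusStep n d r)^[t] A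

section General

variable {n d r : ℕ}

lemma torusAdj_comp_perm (σ : Equiv.Perm (Fin d)) {u v : Fin d → ZMod n} (h : torusAdj u v) :
    torusAdj (u ∘ σ) (v ∘ σ) := by
  obtain ⟨j, hj, hothers⟩ := h
  refine ⟨σ.symm j, by simpa using hj, fun i hi => hothers (σ i) ?_⟩
  rintro rfl
  simp at hi

lemma subset_torusStep (S : Set (Fin d → ZMod n)) : S ⊆ torusStep n d r S :=
  subset_union_left

lemma subset_torusSpan (A : Set (Fin d → ZMod n)) : A ⊆ torusSpan n d r A :=
  fun _ hv => mem_iUnion.2 ⟨0, hv⟩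

variable [NeZero n]

lemma torusStep_mono : Monotone (torusStep n d r) := fun S _ hST =>
  union_subset_union hST fun v (hv : r ≤ _) =>
    show r ≤ _ from hv.trans <| ncard_le_ncard (s := {u ∈ S | torusAdj u v})
      (fun _ hu => ⟨hST hu.1, hu.2⟩) (toFinite _)

lemma torusSpan_mono : Monotone (torusSpan n d r) := fun _ _ hAB =>
  iUnion_mono fun t => (torusStep_mono.iterate t) hAB

lemma mem_torusSpan_of_le_card {A : Set (Fin d → ZMod n)} {v : Fin d → ZMod n}
    (T : Finset (Fin d → ZMod n)) (hT : ∀ u ∈ T, u ∈ torusSpan n d r A ∧ torusAdj u v)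
    (hr : r ≤ T.card) : v ∈ torusSpan n d r A := by
  choose! time htime using fun u hu => mem_iUnion.1 (hT u hu).1
  have hmono := torusStep_mono.monotone_iterate_of_le_map (subset_torusStep (r := r) A)
  refine mem_iUnion.2 ⟨T.sup time + 1, ?_⟩
  rw [iterate_succ_apply']
  refine Or.inr (show r ≤ _ from hr.trans ?_)
  rw [← ncard_coe_finset]
  exact ncard_le_ncard (fun u hu => ⟨hmono (Finset.le_sup hu) (htime u hu), (hT u hu).2⟩)
    (toFinite _)

lemma mem_torusSpan_of_three {A : Set (Fin d → ZMod n)} {v u₁ u₂ u₃ : Fin d → ZMod n}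
    (hr : r ≤ 3) (h₁ : u₁ ∈ torusSpan n d r A) (h₂ : u₂ ∈ torusSpan n d r A)
    (h₃ : u₃ ∈ torusSpan n d r A) (a₁ : torusAdj u₁ v) (a₂ : torusAdj u₂ v)
    (a₃ : torusAdj u₃ v) (h₁₂ : u₁ ≠ u₂) (h₁₃ : u₁ ≠ u₃) (h₂₃ : u₂ ≠ u₃) :
    v ∈ torusSpan n d r A := by
  refine mem_torusSpan_of_le_card {u₁, u₂, u₃} ?_ (hr.trans_eq ?_)
  · simp only [Finset.mem_insert, Finset.mem_singleton]
    rintro u (rfl | rfl | rfl) <;> simp_all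
  · exact Finset.card_eq_three.2 ⟨u₁, u₂, u₃, h₁₂, h₁₃, h₂₃, rfl⟩ |>.symm

lemma image_torusStep_subset {f : (Fin d → ZMod n) → Fin d → ZMod n} (hf : Injective f)
    (hadj : ∀ u v, torusAdj u v → torusAdj (f u) (f v)) (S : Set (Fin d → ZMod n)) :
    f '' torusStep n d r S ⊆ torusStep n d r (f '' S) := by
  rintro _ ⟨v, hv | hv, rfl⟩
  · exact Or.inl (mem_image_of_mem f hv)
  · refine Or.inr (show r ≤ _ from hv.trans ?_)
    rw [← ncard_image_of_injective _ hf]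
    refine ncard_le_ncard ?_ (toFinite _)
    rintro _ ⟨u, ⟨hu, huv⟩, rfl⟩
    exact ⟨mem_image_of_mem f hu, hadj u v huv⟩

lemma map_mem_torusSpan {f : (Fin d → ZMod n) → Fin d → ZMod n} (hf : Injective f)
    (hadj : ∀ u v, torusAdj u v → torusAdj (f u) (f v)) {A : Set (Fin d → ZMod n)}
    {v : Fin d → ZMod n} (hv : v ∈ torusSpan n d r A) : f v ∈ torusSpan n d r (f '' A) := by
  obtain ⟨t, ht⟩ := mem_iUnion.1 hv
  have himage : f '' (torusStep n d r)^[t] A ⊆ (torusStep n d r)^[t] (f '' A) := by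
    clear ht
    induction t with
    | zero => exact subset_rfl
    | succ t ih =>
      simp only [iterate_succ_apply']
      exact (image_torusStep_subset hf hadj _).trans (torusStep_mono ih)
  exact mem_iUnion.2 ⟨t, himage (mem_image_of_mem f ht)⟩

end General

namespace ZMod

variable {n : ℕ}

lemma natCast_ne_natCast {a b : ℕ} (hab : a ≠ b) (ha : a < b + n) (hb : b < a + n) :
    (a : ZMod n) ≠ b := by
  wlog hlt : a < b generalizing a b
  · exact (this hab.symm hb ha (by omega)).symm
  intro h
  have hdvd : n ∣ b - a := by
    rw [← natCast_eq_zero_iff, Nat.cast_sub hlt.le, h, sub_self]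
  exact absurd (Nat.le_of_dvd (by omega) hdvd) (by omega)

lemma natCast_ne_zero_of_pos_of_lt {a : ℕ} (h0 : 0 < a) (ha : a < n) : (a : ZMod n) ≠ 0 := by
  simpa using natCast_ne_natCast (n := n) (b := 0) (by omega) (by omega) (by omega)

end ZMod

section Construction

variable {n : ℕ}

/- Vertices are written with natural-number coordinates so that the order arguments happen in `ℕ`;
where a neighbour wraps around, `n` is used as the representative of `0`. -/
def pt (n x y z : ℕ) : Fin 3 → ZMod n := ![x, y, z]

def planeSeed (n : ℕ) : Set (Fin 3 → ZMod n) := {v | v 0 = v 1 + v 2 ∧ v 1 ≠ 0 ∧ v 2 ≠ 0}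

def seed (n : ℕ) : Set (Fin 3 → ZMod n) := planeSeed n ∪ {pt n 1 1 0, pt n 1 0 1}

lemma torusAdj_pt {x y z x' y' z' : ℕ}
    (h : (x + 1 = x' ∨ x' + 1 = x) ∧ y = y' ∧ z = z' ∨ x = x' ∧ (y + 1 = y' ∨ y' + 1 = y) ∧ z = z' ∨
      x = x' ∧ y = y' ∧ (z + 1 = z' ∨ z' + 1 = z)) :
    torusAdj (pt n x y z) (pt n x' y' z') := by
  rcases h with ⟨h, rfl, rfl⟩ | ⟨rfl, h, rfl⟩ | ⟨rfl, rfl, h⟩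
  · refine ⟨0, by rcases h with rfl | rfl <;> simp [pt], fun i hi => ?_⟩
    fin_cases i <;> simp_all [pt]
  · refine ⟨1, by rcases h with rfl | rfl <;> simp [pt], fun i hi => ?_⟩
    fin_cases i <;> simp_all [pt]
  · refine ⟨2, by rcases h with rfl | rfl <;> simp [pt], fun i hi => ?_⟩
    fin_cases i <;> simp_all [pt]

lemma pt_ne {x y z x' y' z' : ℕ}
    (h : x ≠ x' ∧ x < x' + n ∧ x' < x + n ∨ y ≠ y' ∧ y < y' + n ∧ y' < y + n ∨
      z ≠ z' ∧ z < z' + n ∧ z' < z + n) :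
    pt n x y z ≠ pt n x' y' z' := by
  intro e
  rcases h with ⟨h, ha, hb⟩ | ⟨h, ha, hb⟩ | ⟨h, ha, hb⟩
  · exact ZMod.natCast_ne_natCast h ha hb (congrFun e 0)
  · exact ZMod.natCast_ne_natCast h ha hb (congrFun e 1)
  · exact ZMod.natCast_ne_natCast h ha hb (congrFun e 2)

lemma pt_mem_planeSeed {y z : ℕ} (hy : 1 ≤ y) (hz : 1 ≤ z) (hyn : y < n) (hzn : z < n) :
    pt n (y + z) y z ∈ planeSeed n :=
  ⟨by simp [pt], ZMod.natCast_ne_zero_of_pos_of_lt hy hyn,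
    ZMod.natCast_ne_zero_of_pos_of_lt hz hzn⟩

variable [NeZero n]

lemma pt_mem_span_planeSeed_of_add (k : ℕ) : ∀ {x y z : ℕ}, x = y + z + k → 1 ≤ y → 1 ≤ z →
    y + k < n → z + k < n → pt n x y z ∈ torusSpan n 3 3 (planeSeed n) := by
  induction k with
  | zero =>
    intro x y z hx hy hz hyn hzn
    exact hx ▸ subset_torusSpan _ (pt_mem_planeSeed hy hz (by omega) (by omega))
  | succ k ih =>
    intro x y z hx hy hz hyn hzn
    refine mem_torusSpan_of_three le_rfl (ih (x := x - 1) (by omega) hy hz (by omega) (by omega))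
      (ih (x := x) (y := y + 1) (by omega) (by omega) hz (by omega) (by omega))
      (ih (x := x) (z := z + 1) (by omega) hy (by omega) (by omega) (by omega))
      (torusAdj_pt ?_) (torusAdj_pt ?_) (torusAdj_pt ?_) (pt_ne ?_) (pt_ne ?_) (pt_ne ?_) <;> omega

lemma pt_mem_span_planeSeed_of_sub (k : ℕ) : ∀ {x y z : ℕ}, x + k = y + z → k < y → k < z →
    y < n → z < n → pt n x y z ∈ torusSpan n 3 3 (planeSeed n) := by
  induction k with
  | zero =>
    intro x y z hx hy hz hyn hzn
    exact (show y + z = x by omega) ▸ subset_torusSpan _ (pt_mem_planeSeed hy hz hyn hzn)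
  | succ k ih =>
    intro x y z hx hy hz hyn hzn
    refine mem_torusSpan_of_three le_rfl
      (ih (x := x + 1) (by omega) (by omega) (by omega) hyn hzn)
      (ih (x := x) (y := y - 1) (by omega) (by omega) (by omega) (by omega) hzn)
      (ih (x := x) (z := z - 1) (by omega) (by omega) (by omega) hyn (by omega))
      (torusAdj_pt ?_) (torusAdj_pt ?_) (torusAdj_pt ?_) (pt_ne ?_) (pt_ne ?_) (pt_ne ?_) <;> omega

lemma pt_mem_span_planeSeed {x y z : ℕ} (hy : 1 ≤ y) (hz : 1 ≤ z) (hyn : y < n) (hzn : z < n)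
    (hyx : y < x) (hzx : z < x) (hxy : x < y + n) (hxz : x < z + n) :
    pt n x y z ∈ torusSpan n 3 3 (planeSeed n) := by
  rcases le_or_gt (y + z) x with h | h
  · exact pt_mem_span_planeSeed_of_add (x - y - z) (by omega) hy hz (by omega) (by omega)
  · exact pt_mem_span_planeSeed_of_sub (y + z - x) (by omega) (by omega) (by omega) hyn hzn

lemma pt_mem_span_seed_of_not_between {x y z : ℕ} (hy : 1 ≤ y) (hz : 1 ≤ z) (hyn : y < n)
    (hzn : z < n) (hxn : x ≤ n) (hx : x < y ∧ x < z ∨ y < x ∧ z < x) :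
    pt n x y z ∈ torusSpan n 3 3 (seed n) := by
  refine torusSpan_mono subset_union_left ?_
  rcases hx with hx | hx
  · have h := pt_mem_span_planeSeed (x := x + n) hy hz hyn hzn (by omega) (by omega) (by omega)
      (by omega)
    simpa [pt] using h
  · exact pt_mem_span_planeSeed hy hz hyn hzn hx.1 hx.2 (by omega) (by omega)

lemma pt_mem_span_seed_swap {x y z : ℕ} (h : pt n x y z ∈ torusSpan n 3 3 (seed n)) :
    pt n x z y ∈ torusSpan n 3 3 (seed n) := by
  let σ := Equiv.swap (1 : Fin 3) 2
  have hseed : (· ∘ σ) '' seed n ⊆ seed n := by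
    rintro _ ⟨v, ⟨hv0, hv1, hv2⟩ | rfl | rfl, rfl⟩
    · refine Or.inl ⟨?_, hv2, hv1⟩
      simpa [σ, Equiv.swap_apply_of_ne_of_ne, add_comm] using hv0
    · exact Or.inr (Or.inr (funext fun i => by fin_cases i <;> rfl))
    · exact Or.inr (Or.inl (funext fun i => by fin_cases i <;> rfl))
  have hmap := map_mem_torusSpan (f := (· ∘ σ)) σ.surjective.injective_comp_right
    (fun _ _ => torusAdj_comp_perm σ) h
  have hpt : pt n x y z ∘ σ = pt n x z y := funext fun i => by fin_cases i <;> rfl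
  exact torusSpan_mono hseed (hpt ▸ hmap)

lemma pt_mem_span_seed_succ_of_eq_max (hn : 3 ≤ n) {x : ℕ} (hx : x + 1 < n)
    (hslab : ∀ y z, 1 ≤ y → 1 ≤ z → y < n → z < n → pt n x y z ∈ torusSpan n 3 3 (seed n))
    {y : ℕ} (hy : 1 ≤ y) (hyx : y ≤ x + 1) :
    pt n (x + 1) y (x + 1) ∈ torusSpan n 3 3 (seed n) := by
  have hface : ∀ y, 1 ≤ y → y ≤ x → pt n (x + 1) y (x + 1) ∈ torusSpan n 3 3 (seed n) := by
    intro y hy hyx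
    refine mem_torusSpan_of_three le_rfl (hslab y (x + 1) hy (by omega) (by omega) hx)
      (pt_mem_span_seed_of_not_between (x := x + 2) hy (by omega) (by omega) hx (by omega)
        (by omega))
      (pt_mem_span_seed_of_not_between (x := x + 1) (z := x) hy (by omega) (by omega) (by omega)
        (by omega) (by omega))
      (torusAdj_pt ?_) (torusAdj_pt ?_) (torusAdj_pt ?_) (pt_ne ?_) (pt_ne ?_) (pt_ne ?_) <;> omega
  rcases hyx.lt_or_eq with hyx | rfl
  · exact hface y hy (by omega)
  have hside : pt n (x + 1) x (x + 1) ∈ torusSpan n 3 3 (seed n) := by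
    rcases Nat.eq_zero_or_pos x with rfl | hx0
    · exact subset_torusSpan _ (Or.inr (Or.inr rfl))
    · exact hface x hx0 le_rfl
  refine mem_torusSpan_of_three le_rfl (hslab (x + 1) (x + 1) hy hy hx hx)
    (pt_mem_span_seed_of_not_between (x := x + 2) hy hy hx hx (by omega) (by omega)) hside
    (torusAdj_pt ?_) (torusAdj_pt ?_) (torusAdj_pt ?_) (pt_ne ?_) (pt_ne ?_) (pt_ne ?_) <;> omega

lemma pt_mem_span_seed_succ_of_between (hn : 3 ≤ n) {x : ℕ} (hx : x + 1 < n)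
    (hslab : ∀ y z, 1 ≤ y → 1 ≤ z → y < n → z < n → pt n x y z ∈ torusSpan n 3 3 (seed n))
    (d : ℕ) : ∀ {y z : ℕ}, y + d = z → 1 ≤ y → y ≤ x + 1 →
    x + 1 < z → z < n → pt n (x + 1) y z ∈ torusSpan n 3 3 (seed n) := by
  induction d with
  | zero => intro y z hd hy hyx hxz hzn; omega
  | succ d ih =>
    intro y z hd hy hyx hxz hzn
    have hup : pt n (x + 1) (y + 1) z ∈ torusSpan n 3 3 (seed n) := by
      rcases hyx.lt_or_eq with hyx | hyx
      · exact ih (by omega) (by omega) (by omega) hxz hzn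
      · exact pt_mem_span_seed_of_not_between (by omega) (by omega) (by omega) hzn (by omega)
          (by omega)
    have hdown : pt n (x + 1) y (z - 1) ∈ torusSpan n 3 3 (seed n) := by
      rcases (show x + 1 < z - 1 ∨ z - 1 = x + 1 by omega) with hlt | heq
      · exact ih (by omega) hy hyx hlt (by omega)
      · rw [heq]
        exact pt_mem_span_seed_succ_of_eq_max hn hx hslab hy hyx
    refine mem_torusSpan_of_three le_rfl (hslab y z hy (by omega) (by omega) hzn) hup hdown
      (torusAdj_pt ?_) (torusAdj_pt ?_) (torusAdj_pt ?_) (pt_ne ?_) (pt_ne ?_) (pt_ne ?_) <;> omega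

lemma pt_mem_span_seed_succ (hn : 3 ≤ n) {x : ℕ} (hx : x + 1 < n)
    (hslab : ∀ y z, 1 ≤ y → 1 ≤ z → y < n → z < n → pt n x y z ∈ torusSpan n 3 3 (seed n))
    {y z : ℕ} (hy : 1 ≤ y) (hz : 1 ≤ z) (hyn : y < n) (hzn : z < n) :
    pt n (x + 1) y z ∈ torusSpan n 3 3 (seed n) := by
  wlog hyz : y ≤ z generalizing y z
  · exact pt_mem_span_seed_swap (this hz hy hzn hyn (by omega))
  by_cases hout : x + 1 < y ∨ z < x + 1
  · exact pt_mem_span_seed_of_not_between hy hz hyn hzn hx.le (by omega)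
  rcases (show x + 1 = z ∨ x + 1 < z by omega) with rfl | hxz
  · exact pt_mem_span_seed_succ_of_eq_max hn hx hslab hy (by omega)
  · exact pt_mem_span_seed_succ_of_between hn hx hslab (z - y) (by omega) hy (by omega) hxz hzn

lemma pt_mem_span_seed_cube (hn : 3 ≤ n) (x : ℕ) {y z : ℕ} (hy : 1 ≤ y) (hz : 1 ≤ z)
    (hyn : y < n) (hzn : z < n) : pt n x y z ∈ torusSpan n 3 3 (seed n) := by
  have hslab : ∀ x < n, ∀ y z, 1 ≤ y → 1 ≤ z → y < n → z < n →
      pt n x y z ∈ torusSpan n 3 3 (seed n) := by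
    intro x
    induction x with
    | zero =>
      intro _ y z hy hz hyn hzn
      exact pt_mem_span_seed_of_not_between hy hz hyn hzn (by omega) (by omega)
    | succ x ih =>
      intro hx y z hy hz hyn hzn
      exact pt_mem_span_seed_succ hn hx (ih (by omega)) hy hz hyn hzn
  have hmod : pt n (x % n) y z = pt n x y z := by simp [pt, ZMod.natCast_mod]
  exact hmod ▸ hslab _ (Nat.mod_lt _ (NeZero.pos n)) y z hy hz hyn hzn

lemma pt_mem_span_seed_face_one (hn : 3 ≤ n) (x : ℕ) : pt n x n 1 ∈ torusSpan n 3 3 (seed n) := by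
  have hline : ∀ t, pt n (t + 1) n 1 ∈ torusSpan n 3 3 (seed n) := by
    intro t
    induction t with
    | zero =>
      have h : pt n 1 n 1 = pt n 1 0 1 := by simp [pt]
      exact subset_torusSpan _ (Or.inr (Or.inr h))
    | succ t ih =>
      have hwrap := pt_mem_span_seed_cube hn (t + 2) (y := 1) le_rfl le_rfl (by omega) (by omega)
      rw [show pt n (t + 2) 1 1 = pt n (t + 2) (1 + n) 1 by simp [pt]] at hwrap
      refine mem_torusSpan_of_three le_rfl ih
        (pt_mem_span_seed_cube hn (t + 2) (y := n - 1) (by omega) le_rfl (by omega) (by omega))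
        hwrap (torusAdj_pt ?_) (torusAdj_pt ?_) (torusAdj_pt ?_) (pt_ne ?_) (pt_ne ?_) (pt_ne ?_)
        <;> omega
  have h := hline (x + n - 1)
  rwa [show x + n - 1 + 1 = x + n by omega, show pt n (x + n) n 1 = pt n x n 1 by simp [pt]] at h

lemma pt_mem_span_seed_face (hn : 3 ≤ n) (x : ℕ) {z : ℕ} (hz : 1 ≤ z) (hzn : z < n) :
    pt n x n z ∈ torusSpan n 3 3 (seed n) := by
  obtain ⟨s, rfl⟩ : ∃ s, z = s + 1 := ⟨z - 1, by omega⟩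
  induction s with
  | zero => exact pt_mem_span_seed_face_one hn x
  | succ s ih =>
    have hwrap := pt_mem_span_seed_cube hn x (y := 1) (z := s + 2) le_rfl (by omega) (by omega) hzn
    rw [show pt n x 1 (s + 2) = pt n x (1 + n) (s + 2) by simp [pt]] at hwrap
    refine mem_torusSpan_of_three le_rfl (ih (by omega) (by omega))
      (pt_mem_span_seed_cube hn x (y := n - 1) (z := s + 2) (by omega) (by omega) (by omega) hzn)
      hwrap (torusAdj_pt ?_) (torusAdj_pt ?_) (torusAdj_pt ?_) (pt_ne ?_) (pt_ne ?_) (pt_ne ?_)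
      <;> omega

lemma pt_mem_span_seed_edge (hn : 3 ≤ n) (x : ℕ) : pt n x n n ∈ torusSpan n 3 3 (seed n) := by
  have hface := pt_mem_span_seed_face hn x (z := n - 1) (by omega) (by omega)
  have hwrap := pt_mem_span_seed_face_one hn x
  rw [show pt n x n 1 = pt n x n (1 + n) by simp [pt]] at hwrap
  refine mem_torusSpan_of_three le_rfl hface hwrap (pt_mem_span_seed_swap hface)
    (torusAdj_pt ?_) (torusAdj_pt ?_) (torusAdj_pt ?_) (pt_ne ?_) (pt_ne ?_) (pt_ne ?_) <;> omega

lemma pt_mem_span_seed (hn : 3 ≤ n) (x : ℕ) {y z : ℕ} (hyn : y < n) (hzn : z < n) :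
    pt n x y z ∈ torusSpan n 3 3 (seed n) := by
  have hy : pt n x 0 z = pt n x n z := by simp [pt]
  have hz : pt n x y 0 = pt n x y n := by simp [pt]
  rcases Nat.eq_zero_or_pos y with rfl | hy0 <;> rcases Nat.eq_zero_or_pos z with rfl | hz0
  · rw [hy, show pt n x n 0 = pt n x n n by simp [pt]]
    exact pt_mem_span_seed_edge hn x
  · exact hy ▸ pt_mem_span_seed_face hn x hz0 hzn
  · exact hz ▸ pt_mem_span_seed_swap (pt_mem_span_seed_face hn x hy0 hyn)
  · exact pt_mem_span_seed_cube hn x hy0 hz0 hyn hzn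

lemma seed_percolates (hn : 3 ≤ n) : torusPercolates n 3 3 (seed n) := by
  intro v
  have hv : v = pt n (v 0).val (v 1).val (v 2).val := by
    funext i
    fin_cases i <;> simp [pt]
  rw [hv]
  exact pt_mem_span_seed hn _ (ZMod.val_lt _) (ZMod.val_lt _)

lemma ncard_seed_le : (seed n).ncard ≤ (n - 1) ^ 2 + 2 := by
  have hplane : planeSeed n ⊆ (fun p : ZMod n × ZMod n => ![p.1 + p.2, p.1, p.2]) ''
      ({0}ᶜ ×ˢ {0}ᶜ) := by
    rintro v ⟨hv0, hv1, hv2⟩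
    refine ⟨(v 1, v 2), ⟨hv1, hv2⟩, funext fun i => ?_⟩
    fin_cases i <;> simp [hv0]
  have hcompl : ({0}ᶜ : Set (ZMod n)).ncard = n - 1 := by
    rw [ncard_compl, ncard_singleton, Nat.card_zmod]
  calc (seed n).ncard ≤ (planeSeed n).ncard + ({pt n 1 1 0, pt n 1 0 1} : Set _).ncard :=
        ncard_union_le _ _
    _ ≤ (n - 1) ^ 2 + 2 := by
      gcongr
      · calc (planeSeed n).ncard ≤ _ := ncard_le_ncard hplane (toFinite _)
          _ ≤ _ := ncard_image_le (toFinite _)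
          _ = (n - 1) ^ 2 := by rw [ncard_prod, hcompl, sq]
      · exact (ncard_insert_le _ _).trans (by rw [ncard_singleton])

end Construction

theorem torus_three_dim_upper_bound (n : ℕ) (hn : 3 ≤ n) :
    sInf {k : ℕ | ∃ A : Set (Fin 3 → ZMod n),
      torusPercolates n 3 3 A ∧ A.ncard = k} ≤ n ^ 2 - 2 * n + 4 := by
  have : NeZero n := ⟨by omega⟩
  have hsq : (n - 1) ^ 2 + 2 * n = n ^ 2 + 1 := by
    obtain ⟨m, rfl⟩ : ∃ m, n = m + 1 := ⟨n - 1, by omega⟩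
    simp only [Nat.add_sub_cancel]
    ring
  calc sInf _ ≤ (seed n).ncard := Nat.sInf_le (by exact ⟨seed n, seed_percolates hn, rfl⟩)
    _ ≤ (n - 1) ^ 2 + 2 := ncard_seed_le
    _ ≤ n ^ 2 - 2 * n + 4 := by omega
end
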